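/- arXiv:1702.03608 — 3 statements merged into one kernel-verified Lean document; each statement's English description precedes it below -/
import Mathlib

section
/- In the twisted polynomial ring K{x, δ_m}, for every nonzero integer d and every natural number k, (t^d x)^k = Σ_{j=0}^{k-1} a_j t^{kd + (m-1)j} x^{k-j} for some constants a_j ∈ ℂ with a_0 = 1. -/
set_option maxHeartbeats 1000000
set_option synthInstance.maxHeartbeats 1000000

noncomputable section

/-- `K = ℂ((t))`, the field of formal Laurent series. -/
abbrev K : Type := LaurentSeries ℂ

/-- The derivation `d = t * d/dt` on `K`, acting on coefficients by `cₙ ↦ n * cₙ`. -/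
def dd : K →ₗ[ℂ] K where
  toFun f :=
    { coeff := fun n => (n : ℂ) * f.coeff n
      isPWO_support' := f.isPWO_support'.mono (fun n hn => by
        simp only [Function.mem_support, ne_eq] at hn ⊢
        exact fun h => hn (by rw [h, mul_zero])) }
  map_add' f g := by
    ext n
    simp [mul_add]
  map_smul' c f := by
    ext n
    simp [HahnSeries.coeff_smul]
    ring

/-- Multiplication by `a ∈ K` as a `ℂ`-linear endomorphism of `K`. -/
def mulOp (a : K) : Module.End ℂ K where
  toFun f := a * f
  map_add' := mul_add a
  map_smul' c f := by
    simp only [RingHom.id_apply]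
    rw [← HahnSeries.single_zero_mul_eq_smul, ← HahnSeries.single_zero_mul_eq_smul]
    ring

/-- `d = t d/dt` as an endomorphism. -/
def ddE : Module.End ℂ K := dd

/-- The element `t ∈ K`. -/
def tK : K := HahnSeries.single (1 : ℤ) (1 : ℂ)

/-- The element `t^i ∈ K` for `i : ℤ`. -/
def tpow (i : ℤ) : K := HahnSeries.single i (1 : ℂ)

/-- The operator corresponding to the variable `x` of the twisted polynomial ring
`K{x, δ_m}`, i.e. the derivation `δ_m = t^m d/dt = t^(m-1) ⬝ (t d/dt)`. -/
def Xop (m : ℕ) : Module.End ℂ K := mulOp (tK ^ (m - 1)) * ddE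

/-- The inclusion `O = ℂ[[t]] → K`. -/
def ofPS : PowerSeries ℂ →+* K := HahnSeries.ofPowerSeries ℤ ℂ

/-- The operator attached to a twisted polynomial `Σ_{i ≤ n} a_i x^i` with
coefficients `a_i ∈ O = ℂ[[t]]`, in `K{x, δ_m}`. -/
def opO (m n : ℕ) (a : ℕ → PowerSeries ℂ) : Module.End ℂ K :=
  ∑ i ∈ Finset.range (n + 1), mulOp (ofPS (a i)) * (Xop m) ^ i

/-- Reduction mod `t` of a twisted polynomial with coefficients in `O`. -/
def red (n : ℕ) (a : ℕ → PowerSeries ℂ) : Polynomial ℂ :=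
  ∑ i ∈ Finset.range (n + 1), Polynomial.C (PowerSeries.constantCoeff (a i)) * Polynomial.X ^ i

/-- The embedding `K → K`, `t ↦ t^q`, realising `K` as the subfield `ℂ((s^q)) ⊆ ℂ((s))`. -/
def embHom (q : ℕ) (hq : 0 < q) : K →+* K :=
  HahnSeries.embDomainRingHom (AddMonoidHom.mk' (fun n => (q : ℤ) * n) (by intro a b; ring))
    (fun a b h => by
      simpa using mul_left_cancel₀ (by exact_mod_cast hq.ne' : (q : ℤ) ≠ 0) h)
    (fun a b => by
      constructor
      · intro h; exact le_of_mul_le_mul_left h (by exact_mod_cast hq)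
      · intro h; exact mul_le_mul_of_nonneg_left h (by positivity))

/-! In `K{x, δ_m}` one has `x t^s = t^s x + s t^(s+m-1)`, so left multiplication by `t^d x` sends
`c t^s x^p` to `c t^(d+s) x^(p+1) + c s t^(d+s+m-1) x^p`. By induction on `k`,
`(t^d x)^k = Σ_{j ≤ k} a_{k,j} t^(kd+(m-1)j) x^(k-j)` with `a_{k,0} = 1` and
`a_{k+1,j+1} = a_{k,j+1} + (kd + (m-1)j) a_{k,j}`; the coefficients vanish for `0 < j` and `k ≤ j`,
which removes the term `j = k` once `k ≥ 1`. -/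

instance : IsScalarTower ℂ K K :=
  ⟨fun c a b => by simp only [smul_eq_mul, ← HahnSeries.single_zero_mul_eq_smul, mul_assoc]⟩

instance : SMulCommClass ℂ K K :=
  ⟨fun c a b => by simp only [smul_eq_mul, ← HahnSeries.single_zero_mul_eq_smul, mul_left_comm]⟩

lemma tpow_mul_tpow (i j : ℤ) : tpow i * tpow j = tpow (i + j) := by
  simp [tpow, HahnSeries.single_mul_single]

lemma tK_pow (n : ℕ) : tK ^ n = tpow n := by
  simp [tK, tpow, HahnSeries.single_pow]

lemma coeff_tpow_mul (i : ℤ) (f : K) (n : ℤ) : (tpow i * f).coeff n = f.coeff (n - i) := by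
  conv_lhs => rw [← sub_add_cancel n i]
  rw [tpow, HahnSeries.coeff_single_mul_add, one_mul]

lemma dd_tpow_mul (i : ℤ) (f : K) : dd (tpow i * f) = tpow i * dd f + (i : ℂ) • (tpow i * f) := by
  ext n
  change (n : ℂ) * (tpow i * f).coeff n =
    (tpow i * dd f).coeff n + (i : ℂ) * (tpow i * f).coeff n
  rw [coeff_tpow_mul, coeff_tpow_mul]
  change _ = ((n - i : ℤ) : ℂ) * f.coeff (n - i) + _
  push_cast
  ring

lemma Xop_mul_mulOp_tpow (m : ℕ) (hm : 1 ≤ m) (i : ℤ) :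
    Xop m * mulOp (tpow i) =
      mulOp (tpow i) * Xop m + (i : ℂ) • mulOp (tpow (i + ((m : ℤ) - 1))) := by
  ext f : 1
  change tK ^ (m - 1) * dd (tpow i * f) =
    tpow i * (tK ^ (m - 1) * dd f) + (i : ℂ) • (tpow (i + ((m : ℤ) - 1)) * f)
  rw [dd_tpow_mul, tK_pow, Nat.cast_sub hm, Nat.cast_one, mul_add, mul_smul_comm,
    ← mul_assoc, ← mul_assoc, ← mul_assoc, tpow_mul_tpow, tpow_mul_tpow, add_comm _ i]

lemma mulOp_eq_mul (a : K) : mulOp a = LinearMap.mul ℂ K a := rfl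

lemma mulOp_add (a b : K) : mulOp (a + b) = mulOp a + mulOp b := by
  simp only [mulOp_eq_mul, map_add]

lemma mulOp_smul (c : ℂ) (a : K) : mulOp (c • a) = c • mulOp a := by
  simp only [mulOp_eq_mul, map_smul]

lemma mulOp_zero : mulOp 0 = 0 := by
  simp only [mulOp_eq_mul, map_zero]

lemma mulOp_mul (a b : K) : mulOp (a * b) = mulOp a * mulOp b :=
  LinearMap.mulLeft_mul ℂ K a b

/-- The operator of the monomial `c t^s x^p` of `K{x, δ_m}`. -/
def monomialOp (m : ℕ) (c : ℂ) (s : ℤ) (p : ℕ) : Module.End ℂ K :=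
  mulOp (c • tpow s) * Xop m ^ p

lemma monomialOp_zero (m : ℕ) (s : ℤ) (p : ℕ) : monomialOp m 0 s p = 0 := by
  rw [monomialOp, zero_smul ℂ (tpow s), mulOp_zero, zero_mul]

lemma monomialOp_add (m : ℕ) (c c' : ℂ) (s : ℤ) (p : ℕ) :
    monomialOp m (c + c') s p = monomialOp m c s p + monomialOp m c' s p := by
  rw [monomialOp, add_smul c c' (tpow s), mulOp_add, add_mul, monomialOp, monomialOp]

lemma Xop_mul_mulOp_smul_tpow (m : ℕ) (hm : 1 ≤ m) (c : ℂ) (s : ℤ) :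
    Xop m * mulOp (c • tpow s) =
      mulOp (c • tpow s) * Xop m + mulOp ((c * s) • tpow (s + ((m : ℤ) - 1))) := by
  rw [mulOp_smul, mul_smul_comm, Xop_mul_mulOp_tpow m hm, smul_add, smul_mul_assoc,
    mulOp_smul, smul_smul]

lemma mulOp_tpow_mul_Xop_mul_monomialOp (m : ℕ) (hm : 1 ≤ m) (d : ℤ) (c : ℂ) (s : ℤ) (p : ℕ) :
    mulOp (tpow d) * Xop m * monomialOp m c s p =
      monomialOp m c (d + s) (p + 1) + monomialOp m (c * s) (d + s + ((m : ℤ) - 1)) p := by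
  rw [monomialOp, mul_assoc, ← mul_assoc (Xop m), Xop_mul_mulOp_smul_tpow m hm, add_mul, mul_add]
  simp only [← mul_assoc, ← mulOp_mul, mul_smul_comm, tpow_mul_tpow]
  rw [mul_assoc, ← pow_succ', add_assoc, monomialOp, monomialOp]

/-- `powCoeff d (m - 1) k j` is the coefficient of `t^(kd + (m-1)j) x^(k-j)` in `(t^d x)^k`; the
recursion comes from `x t^s = t^s x + s t^(s+m-1)`. -/
def powCoeff (d e : ℤ) : ℕ → ℕ → ℂ
  | _, 0 => 1
  | 0, _ + 1 => 0
  | k + 1, j + 1 => powCoeff d e k (j + 1) + powCoeff d e k j * ((k * d + e * j : ℤ) : ℂ)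

lemma powCoeff_eq_zero (d e : ℤ) {k j : ℕ} (hj : 0 < j) (hkj : k ≤ j) : powCoeff d e k j = 0 := by
  induction k generalizing j with
  | zero => obtain ⟨j, rfl⟩ := Nat.exists_eq_add_one_of_ne_zero hj.ne'; rfl
  | succ k ih =>
    obtain ⟨j, rfl⟩ := Nat.exists_eq_add_one_of_ne_zero hj.ne'
    rw [powCoeff, ih hj (by omega)]
    rcases Nat.eq_zero_or_pos j with rfl | hj'
    · obtain rfl : k = 0 := by omega
      simp
    · rw [ih hj' (by omega), zero_mul, add_zero]

lemma pow_eq_sum_monomialOp (m : ℕ) (hm : 1 ≤ m) (d : ℤ) (k : ℕ) :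
    (mulOp (tpow d) * Xop m) ^ k = ∑ j ∈ Finset.range (k + 1),
      monomialOp m (powCoeff d (m - 1) k j) (k * d + ((m : ℤ) - 1) * j) (k - j) := by
  induction k with
  | zero =>
    ext f : 1
    simp [monomialOp, powCoeff, tpow, mulOp]
  | succ k ih =>
    set e : ℤ := (m : ℤ) - 1
    set G : ℕ → Module.End ℂ K := fun j =>
      monomialOp m (powCoeff d e k j) ((k + 1 : ℕ) * d + e * j) (k + 1 - j)
    set H : ℕ → Module.End ℂ K := fun j =>
      monomialOp m (powCoeff d e k j * ((k * d + e * j : ℤ) : ℂ)) ((k + 1 : ℕ) * d + e * (j + 1 : ℕ))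
        (k - j)
    have hstep : ∀ j ∈ Finset.range (k + 1), mulOp (tpow d) * Xop m *
        monomialOp m (powCoeff d e k j) (k * d + e * j) (k - j) = G j + H j := by
      intro j hj
      rw [Finset.mem_range] at hj
      rw [mulOp_tpow_mul_Xop_mul_monomialOp m hm, show k - j + 1 = k + 1 - j by omega]
      congr 2 <;> push_cast <;> ring
    calc (mulOp (tpow d) * Xop m) ^ (k + 1)
        = ∑ j ∈ Finset.range (k + 1), (G j + H j) := by
          rw [pow_succ', ih, Finset.mul_sum]
          exact Finset.sum_congr rfl hstep
      _ = ∑ j ∈ Finset.range (k + 2), G j + ∑ j ∈ Finset.range (k + 1), H j := by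
          rw [Finset.sum_add_distrib, Finset.sum_range_succ G (k + 1)]
          simp only [G, powCoeff_eq_zero d e k.succ_pos k.le_succ, monomialOp_zero, add_zero]
      _ = ∑ j ∈ Finset.range (k + 2),
            monomialOp m (powCoeff d e (k + 1) j) ((k + 1 : ℕ) * d + e * j) (k + 1 - j) := by
          rw [Finset.sum_range_succ' G, Finset.sum_range_succ' _ (k + 1), add_right_comm,
            ← Finset.sum_add_distrib]
          simp only [G, H, powCoeff, monomialOp_add]
          push_cast
          rfl

theorem stmt_1_general (m : ℕ) (hm : 1 ≤ m) (d : ℤ) (k : ℕ) (hk : 1 ≤ k) :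
    ∃ a : ℕ → ℂ, a 0 = 1 ∧
      (mulOp (tpow d) * Xop m) ^ k =
        ∑ j ∈ Finset.range k,
          mulOp (a j • tpow ((k : ℤ) * d + ((m : ℤ) - 1) * (j : ℤ))) * Xop m ^ (k - j) := by
  refine ⟨powCoeff d (m - 1) k, by cases k <;> rfl, ?_⟩
  rw [pow_eq_sum_monomialOp m hm, Finset.sum_range_succ, powCoeff_eq_zero _ _ hk le_rfl,
    monomialOp_zero, add_zero]
  rfl

/-- In `K{x, δ_m}`: `(t^d x)^k = Σ_{j=0}^{k-1} a_j t^(kd+(m-1)j) x^(k-j)` for some constants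
`a_j ∈ ℂ` with `a_0 = 1`, as an identity of the associated operators on `K`. -/
theorem stmt_1 (m : ℕ) (hm : 1 ≤ m) (d : ℤ) (hd : d ≠ 0) (k : ℕ) (hk : 1 ≤ k) :
    ∃ a : ℕ → ℂ, a 0 = 1 ∧
      (mulOp (tpow d) * Xop m) ^ k =
        ∑ j ∈ Finset.range k,
          mulOp (a j • tpow ((k : ℤ) * d + ((m : ℤ) - 1) * (j : ℤ))) * Xop m ^ (k - j) :=
  stmt_1_general m hm d k hk
end
end

section
/- (Differential Hensel's Lemma, unramified case m > 1) Let f ∈ O{x, δ_m} with m > 1, where O = ℂ[[t]] and δ_m = t^m d/dt, and let f̄ ∈ ℂ[x] be f modulo t. Suppose f̄ = g₀ h₀ with g₀, h₀ ∈ ℂ[x] coprime. Then there exist g, h ∈ O{x, δ_m} with f = g h, deg g = deg g₀, ḡ = g₀ and h̄ = h₀. -/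
set_option maxHeartbeats 1000000
set_option synthInstance.maxHeartbeats 1000000

noncomputable section

/-!
Write an element of `O{x, δ_m}` through its coefficient sequence in `O = ℂ⟦t⟧`. Moving `x^i`
past a coefficient `g` produces the terms `C(i,k) δ_m^(i-k)(g) x^k`, and since
`δ_m = t^(m-1) · t d/dt` with `m > 1` raises the `t`-adic order, these terms do not see a
perturbation of the factors at the order where it first appears. Hence, if `g h ≡ f` modulo
`t^(N+1)`, replacing `g, h` by `g + t^(N+1) G, h + t^(N+1) H` with `G, H ∈ ℂ[x]` changes the
`t^(N+1)`-coefficient of `g h` by `G h₀ + g₀ H`, exactly as for commutative polynomials. Coprimality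
of `g₀, h₀` solves for `G, H` with `deg G < deg g₀` and `deg H ≤ n - deg g₀`, and the corrections
converge `t`-adically to the factors.
-/

open Finset PowerSeries
open scoped Polynomial

theorem pow_mul_eq_sum_choose_iterate {A S : Type*} [Ring A] (x : A) (f : S → A) (δ : S → S)
    (hx : ∀ s, x * f s = f s * x + f (δ s)) (i : ℕ) (s : S) :
    x ^ i * f s = ∑ k ∈ range (i + 1), i.choose k • (f (δ^[i - k] s) * x ^ k) := by
  set L := LinearMap.mulLeft ℤ x
  set R := LinearMap.mulRight ℤ x
  have hcomm : Commute R (L - R) :=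
    (LinearMap.commute_mulLeft_right x x).symm.sub_right (Commute.refl R)
  have had (k : ℕ) : ((L - R) ^ k) (f s) = f (δ^[k] s) := by
    induction k with
    | zero => rfl
    | succ k ih =>
      rw [pow_succ', Module.End.mul_apply, ih, Function.iterate_succ_apply', LinearMap.sub_apply,
        LinearMap.mulLeft_apply, LinearMap.mulRight_apply, hx, add_sub_cancel_left]
  calc x ^ i * f s = ((R + (L - R)) ^ i) (f s) := by
        rw [add_sub_cancel, LinearMap.pow_mulLeft, LinearMap.mulLeft_apply]
    _ = _ := by
        rw [hcomm.add_pow, LinearMap.sum_apply]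
        refine sum_congr rfl fun k _ => ?_
        rw [Module.End.mul_apply, Module.End.natCast_apply, Module.End.mul_apply, map_nsmul,
          map_nsmul, had, LinearMap.pow_mulRight, LinearMap.mulRight_apply]

namespace Polynomial

theorem coeff_mul_eq_sum_range_sum_range {R : Type*} [Semiring R] {p q : R[X]}
    {d e : ℕ} (hp : p.natDegree ≤ d) (hq : q.natDegree ≤ e) (l : ℕ) :
    (p * q).coeff l = ∑ i ∈ range (d + 1), ∑ j ∈ range (e + 1),
      if i + j = l then p.coeff i * q.coeff j else 0 := by
  conv_lhs => rw [p.as_sum_range' (d + 1) (by omega), q.as_sum_range' (e + 1) (by omega)]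
  simp only [sum_mul_sum, monomial_mul_monomial, finsetSum_coeff, coeff_monomial]

theorem coeff_sum_range_C_mul_X_pow {R : Type*} [Semiring R] (f : ℕ → R) {n l : ℕ}
    (hl : l ≤ n) : (∑ i ∈ range (n + 1), C (f i) * X ^ i).coeff l = f l := by
  simp only [finsetSum_coeff, coeff_C_mul_X_pow, sum_ite_eq, mem_range,
    if_pos (Nat.lt_succ_of_le hl)]

theorem natDegree_sum_range_C_mul_X_pow_le {R : Type*} [Semiring R] (f : ℕ → R) (n : ℕ) :
    (∑ i ∈ range (n + 1), C (f i) * X ^ i).natDegree ≤ n :=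
  natDegree_sum_le_of_forall_le _ _ fun _ hi =>
    (natDegree_C_mul_X_pow_le _ _).trans (Nat.lt_succ_iff.mp (mem_range.mp hi))

theorem exists_mul_add_mul_eq_of_isCoprime {k : Type*} [Field k] {g h : k[X]}
    (hcop : IsCoprime g h) (hg : g ≠ 0) {e : ℕ} (hh : h.natDegree ≤ e) {P : k[X]}
    (hP : P.natDegree ≤ g.natDegree + e) :
    ∃ G H : k[X], G * h + g * H = P ∧ G.degree < g.degree ∧ H.natDegree ≤ e := by
  obtain ⟨u, v, huv⟩ := hcop
  have hG : (P * v % g).degree < g.degree := degree_mod_lt _ hg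
  obtain ⟨H, hH⟩ : g ∣ P - P * v % g * h :=
    ⟨P * u + P * v / g * h, by rw [EuclideanDomain.mod_eq_sub_mul_div]; linear_combination -P * huv⟩
  refine ⟨P * v % g, H, by linear_combination -hH, hG, ?_⟩
  rcases eq_or_ne H 0 with rfl | hH0
  · simp
  have hGh : (P * v % g * h).natDegree ≤ g.natDegree + e :=
    natDegree_mul_le.trans (add_le_add (natDegree_le_natDegree hG.le) hh)
  have := natDegree_mul hg hH0 ▸ hH ▸ (natDegree_sub_le _ _).trans (max_le hP hGh)
  omega

end Polynomial

namespace PowerSeries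

variable {R : Type*} [CommRing R]

theorem X_pow_succ_dvd_sub_X_pow_mul_C_coeff {N : ℕ} {f : R⟦X⟧} (hf : X ^ N ∣ f) :
    X ^ (N + 1) ∣ f - X ^ N * C (coeff N f) := by
  rw [X_pow_dvd_iff] at hf ⊢
  intro p hp
  rw [map_sub, coeff_X_pow_mul', sub_eq_zero]
  rcases (Nat.lt_succ_iff.mp hp).lt_or_eq with hp | rfl
  · rw [if_neg (by omega), hf p hp]
  · rw [if_pos le_rfl, Nat.sub_self, coeff_zero_C]

theorem X_pow_dvd_add_mul_add_sub {N : ℕ} {f g : R⟦X⟧} {r s u v : R} (hf : X ∣ f - C r)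
    (hg : X ∣ g - C s) :
    X ^ (N + 2) ∣ (f + X ^ (N + 1) * C u) * (g + X ^ (N + 1) * C v) - f * g -
      X ^ (N + 1) * C (u * s + r * v) := by
  obtain ⟨f₁, hf₁⟩ := hf
  obtain ⟨g₁, hg₁⟩ := hg
  refine ⟨C u * g₁ + f₁ * C v + X ^ N * C u * C v, ?_⟩
  rw [map_add, map_mul, map_mul]
  linear_combination (X ^ (N + 1) * C u) * hg₁ + (X ^ (N + 1) * C v) * hf₁

theorem X_pow_succ_dvd_sub_of_le {s : ℕ → R⟦X⟧} (hs : ∀ N, X ^ (N + 1) ∣ s (N + 1) - s N)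
    {N M : ℕ} (hNM : N ≤ M) : X ^ (N + 1) ∣ s M - s N := by
  induction M, hNM using Nat.le_induction with
  | base => rw [sub_self]; exact dvd_zero _
  | succ M hNM ih =>
    rw [← sub_add_sub_cancel]
    exact dvd_add ((pow_dvd_pow X (by omega)).trans (hs M)) ih

theorem X_pow_succ_dvd_mk_coeff_sub {s : ℕ → R⟦X⟧} (hs : ∀ N, X ^ (N + 1) ∣ s (N + 1) - s N)
    (N : ℕ) : X ^ (N + 1) ∣ mk (fun p => coeff p (s p)) - s N := by
  rw [X_pow_dvd_iff]
  intro p hp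
  have := X_pow_dvd_iff.mp (X_pow_succ_dvd_sub_of_le hs (Nat.lt_succ_iff.mp hp)) p p.lt_succ_self
  rw [map_sub, sub_eq_zero] at this ⊢
  rw [coeff_mk, this]

theorem eq_of_forall_X_pow_dvd_sub {f g : R⟦X⟧} (h : ∀ N, X ^ (N + 1) ∣ f - g) : f = g := by
  ext p
  have := X_pow_dvd_iff.mp (h p) p p.lt_succ_self
  rwa [map_sub, sub_eq_zero] at this

end PowerSeries

lemma dd_coeff (f : K) (z : ℤ) : (dd f).coeff z = z * f.coeff z := rfl

lemma dd_mul (f g : K) : dd (f * g) = dd f * g + f * dd g := by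
  have hsupp (h : K) : (dd h).support ⊆ h.support := fun z hz h0 => hz (by
    rw [dd_coeff, h0, mul_zero])
  ext z
  rw [HahnSeries.coeff_add, HahnSeries.coeff_mul_left' f.isPWO_support' (hsupp f),
    HahnSeries.coeff_mul_right' g.isPWO_support' (hsupp g), dd_coeff, HahnSeries.coeff_mul]
  erw [← sum_add_distrib]
  rw [mul_sum]
  refine sum_congr rfl fun ij hij => ?_
  rw [dd_coeff, dd_coeff, ← (mem_antidiagonal.mp hij).2.2]
  push_cast
  ring

def eulerOp : ℂ⟦X⟧ →ₗ[ℂ] ℂ⟦X⟧ where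
  toFun f := mk fun p => p * coeff p f
  map_add' f g := by ext; simp [mul_add]
  map_smul' c f := by ext; simp [mul_left_comm]

/-- `δ_m = t^m d/dt = t^(m-1) (t d/dt)` on `O = ℂ⟦X⟧`. -/
def deltaOp (m : ℕ) : Module.End ℂ ℂ⟦X⟧ := LinearMap.mulLeft ℂ (X ^ (m - 1)) ∘ₗ eulerOp

lemma coeff_eulerOp (f : ℂ⟦X⟧) (p : ℕ) : coeff p (eulerOp f) = p * coeff p f :=
  coeff_mk (R := ℂ) p fun q => q * coeff q f

lemma deltaOp_apply (m : ℕ) (f : ℂ⟦X⟧) : deltaOp m f = X ^ (m - 1) * eulerOp f := rfl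

lemma ofPS_eulerOp (f : ℂ⟦X⟧) : ofPS (eulerOp f) = dd (ofPS f) := by
  ext z
  rw [dd_coeff, ofPS, coeff_coe, coeff_coe]
  split_ifs with hz
  · rw [mul_zero]
  · lift z to ℕ using not_lt.mp hz
    rw [Int.natAbs_natCast, coeff_eulerOp, Int.cast_natCast]

lemma ofPS_deltaOp (m : ℕ) (f : ℂ⟦X⟧) : ofPS (deltaOp m f) = tK ^ (m - 1) * dd (ofPS f) := by
  rw [deltaOp_apply, map_mul, map_pow, ofPS_eulerOp, ofPS, HahnSeries.ofPowerSeries_X, tK]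

def coeffOp : ℂ⟦X⟧ →+* Module.End ℂ K where
  toFun a := mulOp (ofPS a)
  map_one' := LinearMap.ext fun f => by
    change ofPS 1 * f = f
    rw [map_one, one_mul]
  map_mul' a b := LinearMap.ext fun f => by
    change ofPS (a * b) * f = ofPS a * (ofPS b * f)
    rw [map_mul, mul_assoc]
  map_zero' := LinearMap.ext fun f => by
    change ofPS 0 * f = 0
    rw [map_zero, zero_mul]
  map_add' a b := LinearMap.ext fun f => by
    change ofPS (a + b) * f = ofPS a * f + ofPS b * f
    rw [map_add, add_mul]

lemma opO_eq_sum (m n : ℕ) (a : ℕ → ℂ⟦X⟧) :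
    opO m n a = ∑ i ∈ range (n + 1), coeffOp (a i) * Xop m ^ i := rfl

lemma Xop_mul_coeffOp (m : ℕ) (a : ℂ⟦X⟧) :
    Xop m * coeffOp a = coeffOp a * Xop m + coeffOp (deltaOp m a) := by
  refine LinearMap.ext fun f => ?_
  change tK ^ (m - 1) * dd (ofPS a * f) = ofPS a * (tK ^ (m - 1) * dd f) + ofPS (deltaOp m a) * f
  rw [dd_mul, ofPS_deltaOp]
  ring

lemma Xop_pow_mul_coeffOp (m i : ℕ) (a : ℂ⟦X⟧) :
    Xop m ^ i * coeffOp a =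
      ∑ k ∈ range (i + 1), i.choose k • (coeffOp ((deltaOp m ^ (i - k)) a) * Xop m ^ k) := by
  simp only [Module.End.pow_apply]
  exact pow_mul_eq_sum_choose_iterate (Xop m) coeffOp (deltaOp m) (Xop_mul_coeffOp m) i a

/-- The coefficients of `(f xⁱ) (g xʲ) = ∑ₖ C(i,k) f δ_m^(i-k)(g) x^(k+j)` in `O{x, δ_m}`. -/
def twistedMonomialMul (m i j : ℕ) (f g : ℂ⟦X⟧) (l : ℕ) : ℂ⟦X⟧ :=
  ∑ k ∈ range (i + 1), if k + j = l then i.choose k • (f * (deltaOp m ^ (i - k)) g) else 0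

def twistedMul (m d e : ℕ) (b c : ℕ → ℂ⟦X⟧) (l : ℕ) : ℂ⟦X⟧ :=
  ∑ i ∈ range (d + 1), ∑ j ∈ range (e + 1), twistedMonomialMul m i j (b i) (c j) l

def untwistedMul (d e : ℕ) (b c : ℕ → ℂ⟦X⟧) (l : ℕ) : ℂ⟦X⟧ :=
  ∑ i ∈ range (d + 1), ∑ j ∈ range (e + 1), if i + j = l then b i * c j else 0

lemma twistedMonomialMul_eq_add (m i j l : ℕ) (f g : ℂ⟦X⟧) :
    twistedMonomialMul m i j f g l = (if i + j = l then f * g else 0) +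
      ∑ k ∈ range i, if k + j = l then i.choose k • (f * (deltaOp m ^ (i - k)) g) else 0 := by
  rw [twistedMonomialMul, sum_range_succ, add_comm, Nat.choose_self, Nat.sub_self, pow_zero,
    Module.End.one_apply, one_smul]

lemma coeffOp_mul_Xop_pow_mul_coeffOp_mul_Xop_pow (m : ℕ) {i j N : ℕ} (hN : i + j ≤ N)
    (f g : ℂ⟦X⟧) :
    coeffOp f * Xop m ^ i * (coeffOp g * Xop m ^ j) =
      ∑ l ∈ range (N + 1), coeffOp (twistedMonomialMul m i j f g l) * Xop m ^ l := by
  simp only [twistedMonomialMul, map_sum, sum_mul]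
  rw [sum_comm]
  simp only [apply_ite coeffOp, map_zero, ite_mul, zero_mul, sum_ite_eq]
  rw [mul_assoc, ← mul_assoc (Xop m ^ i), Xop_pow_mul_coeffOp, sum_mul, mul_sum]
  refine sum_congr rfl fun k hk => ?_
  rw [if_pos (by have := mem_range.mp hk; simp only [mem_range]; omega), map_nsmul, map_mul,
    smul_mul_assoc, smul_mul_assoc, mul_smul_comm, mul_assoc, mul_assoc, pow_add]

lemma opO_mul_opO (m d e : ℕ) (b c : ℕ → ℂ⟦X⟧) :
    opO m d b * opO m e c = opO m (d + e) (twistedMul m d e b c) := by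
  rw [opO_eq_sum, opO_eq_sum, opO_eq_sum, sum_mul_sum]
  conv_rhs => simp only [twistedMul, map_sum, sum_mul]; rw [sum_comm]
  refine sum_congr rfl fun i hi => ?_
  conv_rhs => rw [sum_comm]
  refine sum_congr rfl fun j hj => ?_
  exact coeffOp_mul_Xop_pow_mul_coeffOp_mul_Xop_pow m
    (by have := mem_range.mp hi; have := mem_range.mp hj; omega) _ _

section Valuation

variable {m N : ℕ} {f : ℂ⟦X⟧}

lemma X_pow_dvd_eulerOp (hf : X ^ N ∣ f) : X ^ N ∣ eulerOp f := by
  rw [X_pow_dvd_iff] at hf ⊢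
  intro p hp
  rw [coeff_eulerOp, hf p hp, mul_zero]

lemma X_pow_dvd_deltaOp (hf : X ^ N ∣ f) : X ^ (N + (m - 1)) ∣ deltaOp m f := by
  rw [deltaOp_apply, pow_add, mul_comm (X ^ N)]
  exact mul_dvd_mul_left _ (X_pow_dvd_eulerOp hf)

lemma X_pow_dvd_deltaOp_pow (k : ℕ) (hf : X ^ N ∣ f) : X ^ N ∣ (deltaOp m ^ k) f := by
  induction k with
  | zero => simpa using hf
  | succ k ih =>
    rw [pow_succ', Module.End.mul_apply]
    exact (pow_dvd_pow X (Nat.le_add_right N _)).trans (X_pow_dvd_deltaOp ih)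

lemma X_pow_succ_dvd_deltaOp_pow (hm : 1 < m) {k : ℕ} (hk : k ≠ 0) (hf : X ^ N ∣ f) :
    X ^ (N + 1) ∣ (deltaOp m ^ k) f := by
  obtain ⟨k, rfl⟩ := Nat.exists_eq_succ_of_ne_zero hk
  rw [pow_succ' (deltaOp m), Module.End.mul_apply]
  exact (pow_dvd_pow X (by omega)).trans (X_pow_dvd_deltaOp (X_pow_dvd_deltaOp_pow k hf))

end Valuation

section Congruence

variable {m N : ℕ}

lemma X_pow_succ_dvd_twistedMonomialMul_sub (hm : 1 < m) (i j l : ℕ) {f f' g g' : ℂ⟦X⟧}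
    (hf : X ^ N ∣ f' - f) (hg : X ^ N ∣ g' - g) :
    X ^ (N + 1) ∣ (twistedMonomialMul m i j f' g' l - if i + j = l then f' * g' else 0) -
      (twistedMonomialMul m i j f g l - if i + j = l then f * g else 0) := by
  rw [twistedMonomialMul_eq_add, twistedMonomialMul_eq_add, add_sub_cancel_left,
    add_sub_cancel_left, ← sum_sub_distrib]
  refine dvd_sum fun k hk => ?_
  split_ifs
  · have hr : i - k ≠ 0 := by have := mem_range.mp hk; omega
    have hδg' : X ∣ (deltaOp m ^ (i - k)) g' := by
      simpa using X_pow_succ_dvd_deltaOp_pow (f := g') (N := 0) hm hr (by simp)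
    rw [← smul_sub, nsmul_eq_mul]
    refine Dvd.dvd.mul_left ?_ _
    calc X ^ (N + 1) ∣ (f' - f) * (deltaOp m ^ (i - k)) g' + f * (deltaOp m ^ (i - k)) (g' - g) :=
          dvd_add (pow_succ (X : ℂ⟦X⟧) N ▸ mul_dvd_mul hf hδg')
            ((X_pow_succ_dvd_deltaOp_pow hm hr hg).mul_left f)
      _ = _ := by rw [map_sub]; ring
  · rw [sub_zero]
    exact dvd_zero _

lemma X_pow_succ_dvd_twistedMul_sub (hm : 1 < m) (d e l : ℕ) {b b' c c' : ℕ → ℂ⟦X⟧}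
    (hb : ∀ i, X ^ N ∣ b' i - b i) (hc : ∀ j, X ^ N ∣ c' j - c j) :
    X ^ (N + 1) ∣ (twistedMul m d e b' c' l - untwistedMul d e b' c' l) -
      (twistedMul m d e b c l - untwistedMul d e b c l) := by
  simp only [twistedMul, untwistedMul, ← sum_sub_distrib]
  exact dvd_sum fun i _ => dvd_sum fun j _ =>
    X_pow_succ_dvd_twistedMonomialMul_sub hm i j l (hb i) (hc j)

lemma X_pow_dvd_untwistedMul_sub (d e l : ℕ) {b b' c c' : ℕ → ℂ⟦X⟧}
    (hb : ∀ i, X ^ N ∣ b' i - b i) (hc : ∀ j, X ^ N ∣ c' j - c j) :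
    X ^ N ∣ untwistedMul d e b' c' l - untwistedMul d e b c l := by
  simp only [untwistedMul, ← sum_sub_distrib]
  refine dvd_sum fun i _ => dvd_sum fun j _ => ?_
  split_ifs
  · rw [show b' i * c' j - b i * c j = (b' i - b i) * c' j + b i * (c' j - c j) by ring]
    exact dvd_add ((hb i).mul_right _) ((hc j).mul_left _)
  · rw [sub_zero]
    exact dvd_zero _

lemma X_pow_dvd_twistedMul_sub (hm : 1 < m) (d e l : ℕ) {b b' c c' : ℕ → ℂ⟦X⟧}
    (hb : ∀ i, X ^ N ∣ b' i - b i) (hc : ∀ j, X ^ N ∣ c' j - c j) :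
    X ^ N ∣ twistedMul m d e b' c' l - twistedMul m d e b c l := by
  have := dvd_add ((pow_dvd_pow X N.le_succ).trans (X_pow_succ_dvd_twistedMul_sub hm d e l hb hc))
    (X_pow_dvd_untwistedMul_sub d e l hb hc)
  rwa [sub_sub_sub_comm, sub_add_cancel] at this

end Congruence

lemma untwistedMul_C_coeff {p q : ℂ[X]} {d e : ℕ} (hp : p.natDegree ≤ d) (hq : q.natDegree ≤ e)
    (l : ℕ) : untwistedMul d e (fun i => C (p.coeff i)) (fun j => C (q.coeff j)) l =
      C ((p * q).coeff l) := by
  simp only [untwistedMul, p.coeff_mul_eq_sum_range_sum_range hp hq, map_sum, apply_ite C,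
    map_mul, map_zero]

def addLevel (N : ℕ) (b : ℕ → ℂ⟦X⟧) (G : ℂ[X]) (i : ℕ) : ℂ⟦X⟧ := b i + X ^ N * C (G.coeff i)

lemma X_pow_dvd_untwistedMul_addLevel_sub {N d e l : ℕ} {b c : ℕ → ℂ⟦X⟧} {g₀ h₀ G H : ℂ[X]}
    (hb : ∀ i, X ∣ b i - C (g₀.coeff i)) (hc : ∀ j, X ∣ c j - C (h₀.coeff j))
    (hg₀ : g₀.natDegree ≤ d) (hh₀ : h₀.natDegree ≤ e) (hG : G.natDegree ≤ d)
    (hH : H.natDegree ≤ e) :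
    X ^ (N + 2) ∣ untwistedMul d e (addLevel (N + 1) b G) (addLevel (N + 1) c H) l -
      untwistedMul d e b c l - X ^ (N + 1) * C ((G * h₀ + g₀ * H).coeff l) := by
  have hlin : X ^ (N + 1) * C ((G * h₀ + g₀ * H).coeff l) =
      ∑ i ∈ range (d + 1), ∑ j ∈ range (e + 1), if i + j = l then
        X ^ (N + 1) * C (G.coeff i * h₀.coeff j + g₀.coeff i * H.coeff j) else 0 := by
    rw [Polynomial.coeff_add, G.coeff_mul_eq_sum_range_sum_range hG hh₀,
      g₀.coeff_mul_eq_sum_range_sum_range hg₀ hH, ← sum_add_distrib, map_sum, mul_sum]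
    refine sum_congr rfl fun i _ => ?_
    rw [← sum_add_distrib, map_sum, mul_sum]
    refine sum_congr rfl fun j _ => ?_
    split_ifs <;> simp
  rw [hlin, untwistedMul, untwistedMul, ← sum_sub_distrib, ← sum_sub_distrib]
  refine dvd_sum fun i _ => ?_
  rw [← sum_sub_distrib, ← sum_sub_distrib]
  refine dvd_sum fun j _ => ?_
  split_ifs
  · exact X_pow_dvd_add_mul_add_sub (hb i) (hc j)
  · simp

section Hensel

variable (m d e : ℕ) (a : ℕ → ℂ⟦X⟧) (g₀ h₀ : ℂ[X]) (solve : ℂ[X] → ℂ[X] × ℂ[X])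

def henselDefect (N : ℕ) (b c : ℕ → ℂ⟦X⟧) : ℂ[X] :=
  ∑ l ∈ range (d + e + 1),
    Polynomial.C (coeff N (a l - twistedMul m d e b c l)) * Polynomial.X ^ l

/-- With `solve P` a solution `(G, H)` of the linearised equation `G h₀ + g₀ H = P`,
`henselApprox … N` factors `f` modulo `t^(N+1)`. -/
def henselApprox : ℕ → (ℕ → ℂ⟦X⟧) × (ℕ → ℂ⟦X⟧)
  | 0 => (fun i => C (g₀.coeff i), fun j => C (h₀.coeff j))
  | N + 1 =>
    let bc := henselApprox N
    let GH := solve (henselDefect m d e a (N + 1) bc.1 bc.2)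
    (addLevel (N + 1) bc.1 GH.1, addLevel (N + 1) bc.2 GH.2)

def henselLimit : (ℕ → ℂ⟦X⟧) × (ℕ → ℂ⟦X⟧) :=
  (fun i => mk fun N => coeff N ((henselApprox m d e a g₀ h₀ solve N).1 i),
    fun j => mk fun N => coeff N ((henselApprox m d e a g₀ h₀ solve N).2 j))

lemma X_pow_succ_dvd_henselApprox_succ_sub (N : ℕ) :
    (∀ i, X ^ (N + 1) ∣ (henselApprox m d e a g₀ h₀ solve (N + 1)).1 i -
      (henselApprox m d e a g₀ h₀ solve N).1 i) ∧
    ∀ j, X ^ (N + 1) ∣ (henselApprox m d e a g₀ h₀ solve (N + 1)).2 j -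
      (henselApprox m d e a g₀ h₀ solve N).2 j :=
  ⟨fun _ => Dvd.intro _ (add_sub_cancel_left _ _).symm,
    fun _ => Dvd.intro _ (add_sub_cancel_left _ _).symm⟩

lemma X_dvd_henselApprox_sub (N : ℕ) :
    (∀ i, X ∣ (henselApprox m d e a g₀ h₀ solve N).1 i - C (g₀.coeff i)) ∧
    ∀ j, X ∣ (henselApprox m d e a g₀ h₀ solve N).2 j - C (h₀.coeff j) := by
  have h := X_pow_succ_dvd_henselApprox_succ_sub m d e a g₀ h₀ solve
  refine ⟨fun i => ?_, fun j => ?_⟩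
  · simpa [henselApprox] using X_pow_succ_dvd_sub_of_le
      (s := fun N => (henselApprox m d e a g₀ h₀ solve N).1 i) (fun N => (h N).1 i) N.zero_le
  · simpa [henselApprox] using X_pow_succ_dvd_sub_of_le
      (s := fun N => (henselApprox m d e a g₀ h₀ solve N).2 j) (fun N => (h N).2 j) N.zero_le

lemma X_pow_succ_dvd_henselLimit_sub (N : ℕ) :
    (∀ i, X ^ (N + 1) ∣ (henselLimit m d e a g₀ h₀ solve).1 i -
      (henselApprox m d e a g₀ h₀ solve N).1 i) ∧
    ∀ j, X ^ (N + 1) ∣ (henselLimit m d e a g₀ h₀ solve).2 j -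
      (henselApprox m d e a g₀ h₀ solve N).2 j := by
  have h := X_pow_succ_dvd_henselApprox_succ_sub m d e a g₀ h₀ solve
  exact ⟨fun i => X_pow_succ_dvd_mk_coeff_sub (fun N => (h N).1 i) N,
    fun j => X_pow_succ_dvd_mk_coeff_sub (fun N => (h N).2 j) N⟩

theorem X_pow_succ_dvd_sub_twistedMul_henselApprox (hm : 1 < m)
    (hsolve : ∀ P : ℂ[X], P.natDegree ≤ d + e → (solve P).1 * h₀ + g₀ * (solve P).2 = P ∧
      (solve P).1.natDegree ≤ d ∧ (solve P).2.natDegree ≤ e)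
    (hg₀ : g₀.natDegree ≤ d) (hh₀ : h₀.natDegree ≤ e)
    (ha : ∀ l ≤ d + e, constantCoeff (a l) = (g₀ * h₀).coeff l) (N : ℕ) {l : ℕ}
    (hl : l ≤ d + e) :
    X ^ (N + 1) ∣ a l - twistedMul m d e (henselApprox m d e a g₀ h₀ solve N).1
      (henselApprox m d e a g₀ h₀ solve N).2 l := by
  induction N generalizing l with
  | zero =>
    have hconst : X ∣ a l - C (constantCoeff (a l)) := X_dvd_iff.mpr (by simp)
    have htw := X_pow_succ_dvd_twistedMul_sub (N := 0) hm d e l (b := 0) (c := 0)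
      (b' := (henselApprox m d e a g₀ h₀ solve 0).1)
      (c' := (henselApprox m d e a g₀ h₀ solve 0).2) (by simp) (by simp)
    have hzero : twistedMul m d e 0 0 l = 0 ∧ untwistedMul d e 0 0 l = 0 := by
      simp [twistedMul, twistedMonomialMul, untwistedMul]
    rw [hzero.1, hzero.2, sub_zero, zero_add, henselApprox, untwistedMul_C_coeff hg₀ hh₀,
      ← ha l hl, sub_zero, pow_one] at htw
    simpa [henselApprox] using dvd_sub hconst htw
  | succ N ih =>
    obtain ⟨hb, hc⟩ := X_dvd_henselApprox_sub m d e a g₀ h₀ solve N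
    set b := (henselApprox m d e a g₀ h₀ solve N).1
    set c := (henselApprox m d e a g₀ h₀ solve N).2
    set P := henselDefect m d e a (N + 1) b c
    obtain ⟨hGH, hG, hH⟩ := hsolve P (Polynomial.natDegree_sum_range_C_mul_X_pow_le _ _)
    have hP : ((solve P).1 * h₀ + g₀ * (solve P).2).coeff l =
        coeff (N + 1) (a l - twistedMul m d e b c l) := by
      rw [hGH]
      exact Polynomial.coeff_sum_range_C_mul_X_pow _ hl
    have h1 := X_pow_succ_dvd_sub_X_pow_mul_C_coeff (ih hl)
    have h2 := X_pow_succ_dvd_twistedMul_sub (N := N + 1) hm d e l (b := b) (c := c)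
      (b' := addLevel (N + 1) b (solve P).1) (c' := addLevel (N + 1) c (solve P).2)
      (fun _ => Dvd.intro _ (add_sub_cancel_left _ _).symm)
      (fun _ => Dvd.intro _ (add_sub_cancel_left _ _).symm)
    have h3 := X_pow_dvd_untwistedMul_addLevel_sub (N := N) (l := l) hb hc hg₀ hh₀ hG hH
    rw [hP] at h3
    show X ^ (N + 2) ∣ a l - twistedMul m d e (addLevel (N + 1) b (solve P).1)
      (addLevel (N + 1) c (solve P).2) l
    convert dvd_sub (dvd_sub h1 h2) h3 using 1
    ring

end Hensel

lemma constantCoeff_henselLimit (m d e : ℕ) (a : ℕ → ℂ⟦X⟧) (g₀ h₀ : ℂ[X])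
    (solve : ℂ[X] → ℂ[X] × ℂ[X]) :
    (∀ i, constantCoeff ((henselLimit m d e a g₀ h₀ solve).1 i) = g₀.coeff i) ∧
    ∀ j, constantCoeff ((henselLimit m d e a g₀ h₀ solve).2 j) = h₀.coeff j :=
  ⟨fun i => by simp [henselLimit, henselApprox, ← coeff_zero_eq_constantCoeff_apply],
    fun j => by simp [henselLimit, henselApprox, ← coeff_zero_eq_constantCoeff_apply]⟩

theorem exists_twistedMul_eq_of_isCoprime {m e : ℕ} (hm : 1 < m) {a : ℕ → ℂ⟦X⟧}
    {g₀ h₀ : ℂ[X]} (hcop : IsCoprime g₀ h₀) (hg₀ : g₀ ≠ 0) (hh₀ : h₀.natDegree ≤ e)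
    (ha : ∀ l ≤ g₀.natDegree + e, constantCoeff (a l) = (g₀ * h₀).coeff l) :
    ∃ b c : ℕ → ℂ⟦X⟧, (∀ l ≤ g₀.natDegree + e, twistedMul m g₀.natDegree e b c l = a l) ∧
      (∀ i, constantCoeff (b i) = g₀.coeff i) ∧ ∀ j, constantCoeff (c j) = h₀.coeff j := by
  have hbezout (P : ℂ[X]) : ∃ GH : ℂ[X] × ℂ[X], P.natDegree ≤ g₀.natDegree + e →
      GH.1 * h₀ + g₀ * GH.2 = P ∧ GH.1.natDegree ≤ g₀.natDegree ∧ GH.2.natDegree ≤ e := by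
    by_cases hP : P.natDegree ≤ g₀.natDegree + e
    · obtain ⟨G, H, hGH, hG, hH⟩ := Polynomial.exists_mul_add_mul_eq_of_isCoprime hcop hg₀ hh₀ hP
      exact ⟨(G, H), fun _ => ⟨hGH, Polynomial.natDegree_le_natDegree hG.le, hH⟩⟩
    · exact ⟨0, fun h => absurd h hP⟩
  choose solve hsolve using hbezout
  refine ⟨_, _, fun l hl => ?_, constantCoeff_henselLimit m g₀.natDegree e a g₀ h₀ solve⟩
  refine (eq_of_forall_X_pow_dvd_sub fun N => ?_).symm
  obtain ⟨hb, hc⟩ := X_pow_succ_dvd_henselLimit_sub m g₀.natDegree e a g₀ h₀ solve N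
  have := dvd_sub (X_pow_succ_dvd_sub_twistedMul_henselApprox m g₀.natDegree e a g₀ h₀ solve hm
    hsolve le_rfl hh₀ ha N hl) (X_pow_dvd_twistedMul_sub hm g₀.natDegree e l hb hc)
  rwa [sub_sub_sub_cancel_right] at this

lemma red_eq_of_constantCoeff_eq {n : ℕ} {b : ℕ → ℂ⟦X⟧} {p : ℂ[X]} (hp : p.natDegree ≤ n)
    (hb : ∀ i, constantCoeff (b i) = p.coeff i) : red n b = p := by
  simp only [red, hb, Polynomial.C_mul_X_pow_eq_monomial]
  exact (p.as_sum_range' (n + 1) (Nat.lt_succ_of_le hp)).symm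

/-- Differential Hensel's Lemma for `m > 1`: a coprime factorisation `f̄ = g₀ h₀` mod `t`
lifts to a factorisation `f = g h` in `O{x, δ_m}` with `deg g = deg g₀`, `ḡ = g₀`, `h̄ = h₀`.
Twisted polynomials with coefficients in `O = ℂ[[t]]` are realised via their coefficient
functions and the associated operators on `K`. -/
theorem stmt_4 (m : ℕ) (hm : 1 < m) (n : ℕ) (a : ℕ → PowerSeries ℂ)
    (g₀ h₀ : Polynomial ℂ) (hf0 : red n a ≠ 0) (hfact : red n a = g₀ * h₀)
    (hcop : IsCoprime g₀ h₀) :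
    ∃ b c : ℕ → PowerSeries ℂ,
      opO m n a = opO m g₀.natDegree b * opO m (n - g₀.natDegree) c ∧
      red g₀.natDegree b = g₀ ∧ red (n - g₀.natDegree) c = h₀ := by
  obtain ⟨hg₀, hh₀⟩ := mul_ne_zero_iff.mp (hfact ▸ hf0)
  have hdeg : g₀.natDegree + h₀.natDegree ≤ n := Polynomial.natDegree_mul hg₀ hh₀ ▸ hfact ▸
    Polynomial.natDegree_sum_range_C_mul_X_pow_le _ n
  have hn : g₀.natDegree + (n - g₀.natDegree) = n := by omega
  obtain ⟨b, c, hbc, hb, hc⟩ := exists_twistedMul_eq_of_isCoprime (e := n - g₀.natDegree) hm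
    hcop hg₀ (by omega) fun l hl => by
      rw [← hfact, red, Polynomial.coeff_sum_range_C_mul_X_pow _ (hn ▸ hl)]
  refine ⟨b, c, ?_, red_eq_of_constantCoeff_eq le_rfl hb,
    red_eq_of_constantCoeff_eq (by omega) hc⟩
  rw [opO_mul_opO, hn, opO_eq_sum, opO_eq_sum]
  exact sum_congr rfl fun l hl => by rw [hbc l (by have := mem_range.mp hl; omega)]
end
end

section
/- With notation as in the change-of-variables lemma: if additionally ḡ(X) = g(X) mod s equals (X + λ)^n for some λ ∈ ℂ, then λ ≠ 0 and v_t(a_i) = i·r for all i (so the Newton polygon of f has a single slope r, and r is an integer since v_t(a₁) = r). -/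
set_option maxHeartbeats 1000000
set_option synthInstance.maxHeartbeats 1000000

noncomputable section

/-!
Write `a_i = c (n - i)` for the coefficient of `x^(n-i)` in `f`. Apply the operator identity
defining `g` to `s^m` and compare coefficients of `s^(m - (n - i) p)`. Because the slope `p/q` is
minimal and negative, both sides are polynomials in `m` of degree at most `n - i`, and their
leading coefficients show that the constant term of the coefficient of `X^(n-i)` in `g` is
`[s^(ip)] a_i(s^q)`. Since `ḡ = (X + λ)^n`, this is `λ^i (n choose i)`. The slope is attained,
which forces `λ ≠ 0`. Then every `a_i` has a nonzero coefficient at `t^(ip/q)`, so `q ∣ ip` and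
`v_t(a_i) = ip/q`. Taking `i = 1` gives `q ∣ p`, hence `q = 1`.
-/

open Finset Polynomial

lemma eq_of_sum_pow_eq_sum_prod_sub {F : Type*} [CommRing F] [IsDomain F] {S : Set F}
    (hS : S.Infinite) (N : ℕ) (A B α : ℕ → F)
    (h : ∀ x ∈ S, ∑ j ∈ range (N + 1), A j * x ^ j =
      ∑ j ∈ range (N + 1), B j * ∏ k ∈ range j, (x - α k)) :
    A N = B N := by
  set P : F[X] := ∑ j ∈ range (N + 1), C (A j) * X ^ j
  set Q : F[X] := ∑ j ∈ range (N + 1), C (B j) * ∏ k ∈ range j, (X - C (α k))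
  have hPQ : P = Q := eq_of_infinite_eval_eq P Q <| hS.mono fun x hx => by
    simp [P, Q, eval_finsetSum, eval_prod, h x hx]
  have hP : P.coeff N = A N := by
    simp [P, finsetSum_coeff]
  have hQ : Q.coeff N = B N := by
    have hdeg (j : ℕ) : (∏ k ∈ range j, (X - C (α k))).natDegree = j := by
      rw [natDegree_finsetProd_X_sub_C_eq_card, card_range]
    have hlead : (∏ k ∈ range N, (X - C (α k))).coeff N = 1 := by
      simpa [hdeg] using (monic_prod_X_sub_C α (range N)).coeff_natDegree
    rw [finsetSum_coeff, sum_range_succ, sum_eq_zero, zero_add, coeff_C_mul, hlead, mul_one]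
    intro j hj
    rw [coeff_C_mul, coeff_eq_zero_of_natDegree_lt (by rw [hdeg]; simpa using hj), mul_zero]
  rw [← hP, ← hQ, hPQ]

lemma smul_ddE_single (q : ℕ) (m : ℤ) (a : ℂ) :
    ((q : ℂ)⁻¹ • ddE) (HahnSeries.single m a) = HahnSeries.single m ((m : ℂ) / q * a) := by
  ext d
  change (q : ℂ)⁻¹ * ((d : ℂ) * (HahnSeries.single m a).coeff d) = _
  by_cases h : d = m
  · subst h
    rw [HahnSeries.coeff_single_same, HahnSeries.coeff_single_same, div_eq_inv_mul, mul_assoc]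
  · simp [HahnSeries.coeff_single_of_ne h]

lemma smul_ddE_pow_single (q j : ℕ) (m : ℤ) (a : ℂ) :
    (((q : ℂ)⁻¹ • ddE) ^ j) (HahnSeries.single m a) =
      HahnSeries.single m (((m : ℂ) / q) ^ j * a) := by
  induction j generalizing a with
  | zero => simp
  | succ j ih => rw [pow_succ, Module.End.mul_apply, smul_ddE_single, ih]; ring_nf

lemma tpow_mul_single (e m : ℤ) (a : ℂ) :
    tpow e * HahnSeries.single m a = HahnSeries.single (e + m) a := by
  rw [tpow, HahnSeries.single_mul_single, one_mul]

lemma twist_pow_single (p : ℤ) (q j : ℕ) (m : ℤ) (a : ℂ) :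
    ((mulOp (tpow (-p)) * ((q : ℂ)⁻¹ • ddE)) ^ j) (HahnSeries.single m a) =
      HahnSeries.single (m - j * p) ((∏ k ∈ range j, ((m : ℂ) / q - k * p / q)) * a) := by
  induction j generalizing m a with
  | zero => simp
  | succ j ih =>
    rw [pow_succ, Module.End.mul_apply, Module.End.mul_apply, smul_ddE_single]
    rw [show mulOp (tpow (-p)) _ = tpow (-p) * _ from rfl, tpow_mul_single, ih, prod_range_succ']
    have hprod : ∏ k ∈ range j, ((((-p + m : ℤ)) : ℂ) / q - k * p / q) =
        ∏ k ∈ range j, ((m : ℂ) / q - ((k + 1 : ℕ) : ℂ) * p / q) :=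
      prod_congr rfl fun k _ => by push_cast; ring
    rw [hprod, show -p + m - (j : ℤ) * p = m - ((j + 1 : ℕ) : ℤ) * p by push_cast; ring]
    congr 1
    push_cast
    ring

lemma coeff_tpow_mul_s9 (e : ℤ) (y : K) (d : ℤ) : (tpow e * y).coeff d = y.coeff (d - e) := by
  rw [tpow, ← sub_add_cancel d e, HahnSeries.coeff_single_mul_add, one_mul, add_sub_cancel_right]

lemma coeff_mul_single (y : K) (m : ℤ) (a : ℂ) (d : ℤ) :
    (y * HahnSeries.single m a).coeff d = y.coeff (d - m) * a := by
  rw [← HahnSeries.coeff_mul_single_add, sub_add_cancel]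

lemma mulOp_apply (a f : K) : mulOp a f = a * f := rfl

lemma ofPS_coeff_of_neg (x : PowerSeries ℂ) {d : ℤ} (hd : d < 0) : (ofPS x).coeff d = 0 := by
  rw [ofPS, HahnSeries.ofPowerSeries_apply]
  refine HahnSeries.embDomain_of_notMem_range ?_
  rintro ⟨a, rfl⟩
  exact (Int.natCast_nonneg a).not_gt hd

lemma ofPS_coeff_zero (x : PowerSeries ℂ) : (ofPS x).coeff 0 = PowerSeries.constantCoeff x := by
  simpa [ofPS] using HahnSeries.ofPowerSeries_apply_coeff (Γ := ℤ) x 0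

section embHom

variable (q : ℕ) (hq : 0 < q)

lemma embHom_coeff_mul (x : K) (e : ℤ) : (embHom q hq x).coeff (q * e) = x.coeff e :=
  HahnSeries.embDomain_coeff (a := e)

lemma exists_eq_mul_of_embHom_coeff_ne_zero {x : K} {d : ℤ} (h : (embHom q hq x).coeff d ≠ 0) :
    ∃ e, d = q * e ∧ x.coeff e ≠ 0 := by
  by_cases hd : (q : ℤ) ∣ d
  · obtain ⟨e, rfl⟩ := hd
    exact ⟨e, rfl, by rwa [embHom_coeff_mul] at h⟩
  · refine absurd (HahnSeries.embDomain_of_notMem_range ?_) h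
    rintro ⟨e, rfl⟩
    exact hd ⟨e, rfl⟩

lemma mul_order_eq_of_embHom_coeff_ne_zero {x : K} {d : ℤ}
    (h : (embHom q hq x).coeff d ≠ 0) (hle : x ≠ 0 → d ≤ q * x.order) :
    x ≠ 0 ∧ q * x.order = d := by
  obtain ⟨e, rfl, he⟩ := exists_eq_mul_of_embHom_coeff_ne_zero q hq h
  have hx := HahnSeries.ne_zero_of_coeff_ne_zero he
  refine ⟨hx, le_antisymm ?_ (hle hx)⟩
  exact mul_le_mul_of_nonneg_left (HahnSeries.order_le_of_coeff_ne_zero he) (by positivity)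

end embHom

/-- `g(X) = s^{-np} f(s^p X)` with `s^q = t`: under `t ↦ s^q` the derivation `t d/dt` becomes
`q⁻¹ s d/ds`, and `X = s^{-p} x`. -/
def IsChangeOfVariables (n : ℕ) (c : ℕ → K) (p : ℤ) (q : ℕ) (hq : 0 < q)
    (b : ℕ → PowerSeries ℂ) : Prop :=
  mulOp (tpow (-((n : ℤ) * p))) *
      (∑ j ∈ range (n + 1), mulOp (embHom q hq (c j)) * ((q : ℂ)⁻¹ • ddE) ^ j) =
    ∑ j ∈ range (n + 1), mulOp (ofPS (b j)) * (mulOp (tpow (-p)) * ((q : ℂ)⁻¹ • ddE)) ^ j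

lemma coeff_red {n j : ℕ} (b : ℕ → PowerSeries ℂ) (hj : j ≤ n) :
    (red n b).coeff j = PowerSeries.constantCoeff (b j) := by
  simp [red, finsetSum_coeff, Nat.lt_succ_of_le hj]

namespace IsChangeOfVariables

variable {n : ℕ} {c : ℕ → K} {p : ℤ} {q : ℕ} {hq : 0 < q} {b : ℕ → PowerSeries ℂ}

lemma sum_coeff_eq (hg : IsChangeOfVariables n c p q hq b) (j₀ : ℕ) (m : ℤ) :
    ∑ j ∈ range (n + 1), (embHom q hq (c j)).coeff ((n - j₀) * p) * ((m : ℂ) / q) ^ j =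
      ∑ j ∈ range (n + 1),
        (ofPS (b j)).coeff ((j - j₀) * p) * ∏ k ∈ range j, ((m : ℂ) / q - k * p / q) := by
  have h := congrArg
    (fun T : Module.End ℂ K => (T (HahnSeries.single m 1)).coeff (m - j₀ * p)) hg
  simp only [Module.End.mul_apply, LinearMap.sum_apply, smul_ddE_pow_single, twist_pow_single,
    mulOp_apply, mul_sum, HahnSeries.coeff_sum, coeff_tpow_mul_s9, coeff_mul_single, mul_one] at h
  convert h using 3 <;> ring_nf

/-- Both sides of `IsChangeOfVariables.sum_coeff_eq` are polynomials in `m / q` of degree at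
most `j₀`: the left because of the slope bound, the right because the `b j` are power series. -/
lemma constantCoeff_eq (hg : IsChangeOfVariables n c p q hq b) (hp : p < 0)
    (hslope : ∀ j ≤ n, c j ≠ 0 → ((n : ℤ) - j) * p ≤ q * (c j).order)
    {j₀ : ℕ} (hj₀ : j₀ ≤ n) :
    PowerSeries.constantCoeff (b j₀) = (embHom q hq (c j₀)).coeff ((n - j₀) * p) := by
  set A : ℕ → ℂ := fun j => (embHom q hq (c j)).coeff ((n - j₀) * p)
  set B : ℕ → ℂ := fun j => (ofPS (b j)).coeff ((j - j₀) * p)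
  have hsub : range (j₀ + 1) ⊆ range (n + 1) := range_subset_range.2 (by omega)
  have hA (j : ℕ) (hj : j ∈ range (n + 1)) (hj' : j ∉ range (j₀ + 1)) : A j = 0 := by
    simp only [mem_range, not_lt] at hj hj'
    by_contra hne
    obtain ⟨e, he, hce⟩ := exists_eq_mul_of_embHom_coeff_ne_zero q hq hne
    have hbound := hslope j (by omega) (HahnSeries.ne_zero_of_coeff_ne_zero hce)
    have hord : (q : ℤ) * (c j).order ≤ q * e :=
      mul_le_mul_of_nonneg_left (HahnSeries.order_le_of_coeff_ne_zero hce) (by positivity)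
    have hlt : ((n : ℤ) - j₀) * p < ((n : ℤ) - j) * p := mul_lt_mul_of_neg_right (by omega) hp
    omega
  have hB (j : ℕ) (hj' : j ∉ range (j₀ + 1)) : B j = 0 := by
    simp only [mem_range, not_lt] at hj'
    exact ofPS_coeff_of_neg _ (mul_neg_of_pos_of_neg (by omega) hp)
  have hinj : Function.Injective fun m : ℤ => (m : ℂ) / q := fun a b h => by
    simpa [div_left_inj' (show (q : ℂ) ≠ 0 by exact_mod_cast hq.ne')] using h
  have htop := eq_of_sum_pow_eq_sum_prod_sub (Set.infinite_range_of_injective hinj) j₀ A B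
    (fun k => k * p / q) ?_
  · simpa [A, B, ofPS_coeff_zero] using htop.symm
  rintro _ ⟨m, rfl⟩
  rw [sum_subset hsub fun j hj hj' => by simp [hA j hj hj'],
    sum_subset hsub fun j _ hj' => by simp [hB j hj']]
  exact hg.sum_coeff_eq j₀ m

lemma embHom_coeff_eq_of_red_eq (hg : IsChangeOfVariables n c p q hq b) (hp : p < 0)
    (hslope : ∀ j ≤ n, c j ≠ 0 → ((n : ℤ) - j) * p ≤ q * (c j).order) {lam : ℂ}
    (hbar : red n b = (X + C lam) ^ n) {i : ℕ} (hi : i ≤ n) :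
    (embHom q hq (c (n - i))).coeff (i * p) = lam ^ i * n.choose i := by
  have h := hg.constantCoeff_eq hp hslope (Nat.sub_le n i)
  rwa [Nat.cast_sub hi, sub_sub_cancel, ← coeff_red b (Nat.sub_le n i), hbar,
    coeff_X_add_C_pow, Nat.sub_sub_self hi, Nat.choose_symm hi, eq_comm] at h

end IsChangeOfVariables

lemma sub_mul_le_mul_order {n : ℕ} {c : ℕ → K} (hmonic : c n = 1) {p : ℤ} {q : ℕ}
    (hq : 0 < q)
    (hmin : ∀ i, 1 ≤ i → i ≤ n → c (n - i) ≠ 0 →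
      (p : ℚ) / (q : ℚ) ≤ ((c (n - i)).order : ℚ) / (i : ℚ))
    {j : ℕ} (hj : j ≤ n) (hc : c j ≠ 0) :
    ((n : ℤ) - j) * p ≤ q * (c j).order := by
  obtain rfl | hlt := hj.eq_or_lt
  · simp [hmonic]
  have h := hmin (n - j) (by omega) (Nat.sub_le n j) (by rwa [Nat.sub_sub_self hj])
  rw [Nat.sub_sub_self hj, div_le_div_iff₀ (by positivity) (by simpa using hlt),
    Nat.cast_sub hj] at h
  have h' : ((((n : ℤ) - j) * p : ℤ) : ℚ) ≤ ((q * (c j).order : ℤ) : ℚ) := by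
    push_cast; linarith
  exact_mod_cast h'

theorem stmt_9_general (n : ℕ) (hn : 1 ≤ n) (c : ℕ → K) (hmonic : c n = 1)
    (p : ℤ) (q : ℕ) (hq : 0 < q) (hcop : Int.gcd p (q : ℤ) = 1)
    (hneg : (p : ℚ) / (q : ℚ) < 0)
    (hmin : ∀ i, 1 ≤ i → i ≤ n → c (n - i) ≠ 0 →
      (p : ℚ) / (q : ℚ) ≤ ((c (n - i)).order : ℚ) / (i : ℚ))
    (hattain : ∃ i, 1 ≤ i ∧ i ≤ n ∧ c (n - i) ≠ 0 ∧
      (p : ℚ) / (q : ℚ) = ((c (n - i)).order : ℚ) / (i : ℚ))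
    (b : ℕ → PowerSeries ℂ)
    (hg : mulOp (tpow (-((n : ℤ) * p))) *
          (∑ j ∈ Finset.range (n + 1), mulOp (embHom q hq (c j)) * ((q : ℂ)⁻¹ • ddE) ^ j) =
        ∑ j ∈ Finset.range (n + 1),
          mulOp (ofPS (b j)) * (mulOp (tpow (-p)) * ((q : ℂ)⁻¹ • ddE)) ^ j)
    (lam : ℂ) (hbar : red n b = (Polynomial.X + Polynomial.C lam) ^ n) :
    lam ≠ 0 ∧ q = 1 ∧
      ∀ i, 1 ≤ i → i ≤ n →
        c (n - i) ≠ 0 ∧ ((c (n - i)).order : ℚ) = (i : ℚ) * ((p : ℚ) / (q : ℚ)) := by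
  have hp : p < 0 := by exact_mod_cast neg_of_div_neg_left hneg (Nat.cast_nonneg q)
  have hslope := fun j => sub_mul_le_mul_order hmonic hq hmin (j := j)
  have hcoeff (i : ℕ) (hi : i ≤ n) :=
    IsChangeOfVariables.embHom_coeff_eq_of_red_eq hg hp hslope hbar hi
  have hlam : lam ≠ 0 := by
    obtain ⟨i₀, hi₀, hi₀n, hc₀, hord₀⟩ := hattain
    rw [div_eq_div_iff (by positivity) (by positivity)] at hord₀
    have hord : (i₀ : ℤ) * p = q * (c (n - i₀)).order := by
      rw [mul_comm, mul_comm (q : ℤ)]; exact_mod_cast hord₀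
    have hcoeff₀ := hcoeff i₀ hi₀n
    rw [hord, embHom_coeff_mul] at hcoeff₀
    have hne : lam ^ i₀ * n.choose i₀ ≠ 0 :=
      hcoeff₀ ▸ HahnSeries.coeff_order_eq_zero.not.2 hc₀
    rintro rfl
    simp [zero_pow (by omega : i₀ ≠ 0)] at hne
  have horder (i : ℕ) (hin : i ≤ n) : c (n - i) ≠ 0 ∧ q * (c (n - i)).order = i * p := by
    refine mul_order_eq_of_embHom_coeff_ne_zero q hq ?_ fun hc => ?_
    · rw [hcoeff i hin]
      exact mul_ne_zero (pow_ne_zero _ hlam) (by exact_mod_cast (Nat.choose_pos hin).ne')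
    · simpa [Nat.cast_sub hin] using hslope (n - i) (Nat.sub_le n i) hc
  have hq1 : q = 1 := by
    have hdvd : (q : ℤ) ∣ p := ⟨_, by simpa using ((horder 1 hn).2).symm⟩
    exact_mod_cast Int.eq_one_of_dvd_one (by positivity)
      (Int.gcd_eq_one_iff.1 hcop _ hdvd dvd_rfl)
  subst hq1
  refine ⟨hlam, rfl, fun i hi hin => ⟨(horder i hin).1, ?_⟩⟩
  have hord := (horder i hin).2
  rw [Nat.cast_one, one_mul] at hord
  rw [Nat.cast_one, div_one]
  exact_mod_cast hord

/-- If moreover `ḡ(X) = (X + λ)^n` mod `s`, then `λ ≠ 0`, the slope `r = p/q` is an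
integer (`q = 1`), and `v_t(a_i) = i ⬝ r` for all `i` (single-slope Newton polygon). -/
theorem stmt_9 (n : ℕ) (hn : 1 ≤ n) (c : ℕ → K) (hmonic : c n = 1)
    (p : ℤ) (q : ℕ) (hq : 0 < q) (hcop : Int.gcd p (q : ℤ) = 1)
    (hneg : (p : ℚ) / (q : ℚ) < 0)
    (hmin : ∀ i, 1 ≤ i → i ≤ n → c (n - i) ≠ 0 →
      (p : ℚ) / (q : ℚ) ≤ ((c (n - i)).order : ℚ) / (i : ℚ))
    (hattain : ∃ i, 1 ≤ i ∧ i ≤ n ∧ c (n - i) ≠ 0 ∧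
      (p : ℚ) / (q : ℚ) = ((c (n - i)).order : ℚ) / (i : ℚ))
    (b : ℕ → PowerSeries ℂ) (hb : b n = 1)
    (hg : mulOp (tpow (-((n : ℤ) * p))) *
          (∑ j ∈ Finset.range (n + 1), mulOp (embHom q hq (c j)) * ((q : ℂ)⁻¹ • ddE) ^ j) =
        ∑ j ∈ Finset.range (n + 1),
          mulOp (ofPS (b j)) * (mulOp (tpow (-p)) * ((q : ℂ)⁻¹ • ddE)) ^ j)
    (lam : ℂ) (hbar : red n b = (Polynomial.X + Polynomial.C lam) ^ n) :
    lam ≠ 0 ∧ q = 1 ∧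
      ∀ i, 1 ≤ i → i ≤ n →
        c (n - i) ≠ 0 ∧ ((c (n - i)).order : ℚ) = (i : ℚ) * ((p : ℚ) / (q : ℚ)) :=
  stmt_9_general n hn c hmonic p q hq hcop hneg hmin hattain b hg lam hbar
end
end
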